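/- Let G be a connected graph with n ≥ 3 vertices, u a pendant vertex of G, and G+P_t the graph obtained by attaching a new path of t ≥ 1 vertices to u. Then Alb(G + P_t) = Alb(G). -/

import Mathlib

open Finset

/-- The Albertson irregularity index `Alb(G) = ∑_{uv∈E(G)} |d(u)-d(v)|`. -/
noncomputable def Alb {V : Type*} [Fintype V] (G : SimpleGraph V) [DecidableRel G.Adj] : ℝ :=
  (∑ u : V, ∑ v ∈ G.neighborFinset u, |(G.degree u : ℝ) - (G.degree v : ℝ)|) / 2

/-- The graph `G + P_t`, obtained from `G` by attaching a new pendant path with `t` new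
vertices `w_0, …, w_{t-1}` to the vertex `u`: we add edges `u w_0` and `w_i w_{i+1}`. -/
def addPath {V : Type*} (G : SimpleGraph V) (u : V) (t : ℕ) : SimpleGraph (V ⊕ Fin t) where
  Adj x y :=
    (∃ a b, x = Sum.inl a ∧ y = Sum.inl b ∧ G.Adj a b) ∨
    (∃ j : Fin t, (j : ℕ) = 0 ∧ ((x = Sum.inl u ∧ y = Sum.inr j) ∨ (x = Sum.inr j ∧ y = Sum.inl u))) ∨
    (∃ i j : Fin t, x = Sum.inr i ∧ y = Sum.inr j ∧ ((i : ℕ) + 1 = j ∨ (j : ℕ) + 1 = i))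
  symm := by
    constructor
    rintro x y (⟨a, b, hx, hy, h⟩ | ⟨j, hj, ⟨hx, hy⟩ | ⟨hx, hy⟩⟩ | ⟨i, j, hx, hy, h⟩)
    · exact Or.inl ⟨b, a, hy, hx, h.symm⟩
    · exact Or.inr (Or.inl ⟨j, hj, Or.inr ⟨hy, hx⟩⟩)
    · exact Or.inr (Or.inl ⟨j, hj, Or.inl ⟨hy, hx⟩⟩)
    · exact Or.inr (Or.inr ⟨j, i, hy, hx, h.symm⟩)
  loopless := by
    constructor
    rintro x (⟨a, b, hx, hy, h⟩ | ⟨j, hj, ⟨hx, hy⟩ | ⟨hx, hy⟩⟩ | ⟨i, j, hx, hy, h⟩) <;>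
      subst hx <;> simp_all

instance addPathAdjDecidable {V : Type*} [Fintype V] [DecidableEq V]
    (G : SimpleGraph V) [DecidableRel G.Adj] (u : V) (t : ℕ) :
    DecidableRel (addPath G u t).Adj := fun x y => by
  unfold addPath
  infer_instance

/-!
Attaching the path raises the degree of `u` from 1 to 2 and changes no other old degree, so
the only old edge whose term changes is the edge `uv`, and it loses exactly 1 because
`d(v) ≥ 2` (this is where connectivity and `n ≥ 3` enter). Every new edge has both ends of
degree 2 except at the far end `ℓ` of the path, which has degree 1, so on new edges
`|d(x) - d(y)| = [x = ℓ] + [y = ℓ]`; summed over ordered adjacent pairs this gives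
`2 · deg ℓ = 2`, i.e. the new edges contribute exactly 1.
-/

open Function

namespace SimpleGraph

variable {W : Type*} [Fintype W] (H : SimpleGraph W) [DecidableRel H.Adj]

lemma degree_eq_sum_ite (x : W) : H.degree x = ∑ y, if H.Adj x y then 1 else 0 := by
  rw [← card_neighborFinset_eq_degree, neighborFinset_eq_filter, Finset.card_filter]

lemma eq_of_adj_of_degree_eq_one {u v w : W} (hu : H.degree u = 1) (huv : H.Adj u v)
    (huw : H.Adj u w) : w = v :=
  (degree_eq_one_iff_existsUnique_adj.mp hu).unique huw huv

lemma two_le_degree_of_adj_of_degree_eq_one (hH : H.Preconnected) (hcard : 3 ≤ Fintype.card W)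
    {u v : W} (huv : H.Adj u v) (hu : H.degree u = 1) : 2 ≤ H.degree v := by
  by_contra! hv
  have hv : H.degree v = 1 :=
    le_antisymm (by omega) (H.degree_pos_iff_exists_adj v |>.mpr ⟨u, huv.symm⟩)
  obtain ⟨w, hwu, hwv⟩ : ∃ w, w ≠ u ∧ w ≠ v := by
    by_contra! h
    have : Fintype.card W ≤ 2 := by
      classical
      calc Fintype.card W ≤ ({u, v} : Finset W).card :=
            Finset.card_le_card fun w _ => by simpa [or_iff_not_imp_left] using h w
        _ ≤ 2 := Finset.card_le_two
    omega
  -- a walk from `u` to `w` has to leave `{u, v}`, but neither vertex has a neighbour outside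
  obtain ⟨⟨⟨x, y⟩, hxy⟩, -, hx, hy⟩ :=
    (hH u w).some.exists_boundary_dart {u, v} (by simp) (by simp [hwu, hwv])
  simp only [Set.mem_insert_iff, Set.mem_singleton_iff, not_or] at hx hy
  rcases hx with rfl | rfl
  · exact hy.2 (H.eq_of_adj_of_degree_eq_one hu huv hxy)
  · exact hy.1 (H.eq_of_adj_of_degree_eq_one hv huv.symm hxy)

lemma sum_sum_adj_ite_eq_two_mul_degree [DecidableEq W] (ℓ : W) :
    ∑ x, ∑ y, (if H.Adj x y then (if x = ℓ then 1 else 0) + (if y = ℓ then 1 else 0) else 0 : ℝ)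
      = 2 * H.degree ℓ := by
  have hrow : ∑ x, ∑ y, (if H.Adj x y then if x = ℓ then 1 else 0 else 0 : ℝ) = H.degree ℓ := by
    rw [Finset.sum_eq_single ℓ (fun x _ hx => by simp [hx]) (by simp), H.degree_eq_sum_ite ℓ]
    simp
  have hcol : ∑ x, ∑ y, (if H.Adj x y then if y = ℓ then 1 else 0 else 0 : ℝ) = H.degree ℓ := by
    rw [Finset.sum_comm, ← hrow]
    simp only [adj_comm]
  simp only [ite_add_zero, Finset.sum_add_distrib, hrow, hcol]
  ring

lemma sum_sum_adj_abs_sub_update [DecidableEq W] {f : W → ℝ} {u v : W} (hu : H.degree u = 1)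
    (huv : H.Adj u v) (hv : f u + 1 ≤ f v) :
    ∑ a, ∑ b, (if H.Adj a b then |update f u (f u + 1) a - update f u (f u + 1) b| else 0) + 2
      = ∑ a, ∑ b, if H.Adj a b then |f a - f b| else 0 := by
  have hpt : ∀ a b, (if H.Adj a b then |update f u (f u + 1) a - update f u (f u + 1) b| else 0)
      + (if H.Adj a b then (if a = u then 1 else 0) + (if b = u then 1 else 0) else 0)
      = if H.Adj a b then |f a - f b| else 0 := by
    intro a b
    by_cases hab : H.Adj a b
    · simp only [hab, if_true]
      by_cases ha : a = u
      · obtain rfl := ha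
        obtain rfl := H.eq_of_adj_of_degree_eq_one hu huv hab
        rw [update_self, update_of_ne huv.ne', if_pos rfl, if_neg huv.ne',
          abs_of_nonpos (by linarith), abs_of_nonpos (by linarith)]
        ring
      by_cases hb : b = u
      · obtain rfl := hb
        obtain rfl := H.eq_of_adj_of_degree_eq_one hu huv hab.symm
        rw [update_self, update_of_ne huv.ne', if_pos rfl, if_neg huv.ne',
          abs_of_nonneg (by linarith), abs_of_nonneg (by linarith)]
        ring
      · simp [ha, hb]
    · simp [hab]
  calc _ = ∑ a, ∑ b, (if H.Adj a b then |update f u (f u + 1) a - update f u (f u + 1) b| else 0)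
        + 2 * H.degree u := by rw [hu]; norm_num
    _ = _ := by
      rw [← H.sum_sum_adj_ite_eq_two_mul_degree, ← Finset.sum_add_distrib]
      simp only [← Finset.sum_add_distrib, hpt]

end SimpleGraph

lemma two_mul_Alb {W : Type*} [Fintype W] (H : SimpleGraph W) [DecidableRel H.Adj] :
    2 * Alb H = ∑ x, ∑ y, if H.Adj x y then |(H.degree x : ℝ) - H.degree y| else 0 := by
  simp only [Alb, SimpleGraph.neighborFinset_eq_filter, Finset.sum_filter]
  ring

lemma abs_sub_ite_sub_sub_ite_of_ne {W : Type*} [DecidableEq W] {x y ℓ : W} (hxy : x ≠ y)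
    (c : ℝ) : |(c - if x = ℓ then 1 else 0) - (c - if y = ℓ then 1 else 0)|
      = (if x = ℓ then 1 else 0) + (if y = ℓ then 1 else 0) := by
  by_cases hx : x = ℓ <;> by_cases hy : y = ℓ <;> simp_all

lemma sum_fin_ite_val_eq (t m : ℕ) :
    ∑ k : Fin t, (if (k : ℕ) = m then 1 else 0 : ℕ) = if m < t then 1 else 0 := by
  rw [Fin.sum_univ_eq_sum_range (fun k => if k = m then 1 else 0)]
  simp

section addPath

variable {V : Type*} (G : SimpleGraph V) (u : V) (t : ℕ)

@[simp]
lemma addPath_adj_inl_inl {a b : V} :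
    (addPath G u t).Adj (Sum.inl a) (Sum.inl b) ↔ G.Adj a b := by
  constructor
  · rintro (⟨a', b', ha, hb, h⟩ | ⟨j, -, ⟨-, h⟩ | ⟨h, -⟩⟩ | ⟨i, j, h, -⟩) <;> simp_all
  · exact fun h => Or.inl ⟨a, b, rfl, rfl, h⟩

@[simp]
lemma addPath_adj_inl_inr {a : V} {j : Fin t} :
    (addPath G u t).Adj (Sum.inl a) (Sum.inr j) ↔ a = u ∧ (j : ℕ) = 0 := by
  constructor
  · rintro (⟨a', b', -, h, -⟩ | ⟨k, hk, ⟨h1, h2⟩ | ⟨h, -⟩⟩ | ⟨i, k, h, -⟩) <;> simp_all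
  · rintro ⟨rfl, hj⟩
    exact Or.inr (Or.inl ⟨j, hj, Or.inl ⟨rfl, rfl⟩⟩)

@[simp]
lemma addPath_adj_inr_inl {a : V} {j : Fin t} :
    (addPath G u t).Adj (Sum.inr j) (Sum.inl a) ↔ a = u ∧ (j : ℕ) = 0 := by
  rw [SimpleGraph.adj_comm, addPath_adj_inl_inr]

@[simp]
lemma addPath_adj_inr_inr {i j : Fin t} :
    (addPath G u t).Adj (Sum.inr i) (Sum.inr j) ↔ (i : ℕ) + 1 = j ∨ (j : ℕ) + 1 = i := by
  constructor
  · rintro (⟨a', b', h, -⟩ | ⟨k, -, ⟨h, -⟩ | ⟨-, h⟩⟩ | ⟨i', k, h1, h2, h⟩) <;> simp_all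
  · exact fun h => Or.inr (Or.inr ⟨i, j, rfl, rfl, h⟩)

variable [Fintype V] [DecidableEq V] [DecidableRel G.Adj]

lemma addPath_degree_inl (ht : 1 ≤ t) (a : V) :
    (addPath G u t).degree (Sum.inl a) = G.degree a + if a = u then 1 else 0 := by
  rw [SimpleGraph.degree_eq_sum_ite, Fintype.sum_sum_type, G.degree_eq_sum_ite]
  simp only [addPath_adj_inl_inl, addPath_adj_inl_inr, ite_and, Finset.sum_ite_irrel,
    sum_fin_ite_val_eq, Finset.sum_const_zero]
  split_ifs <;> omega

lemma addPath_degree_inr (j : Fin t) :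
    (addPath G u t).degree (Sum.inr j) = if (j : ℕ) + 1 = t then 1 else 2 := by
  have hj := j.isLt
  have hsplit : ∀ k : Fin t, (if (j : ℕ) + 1 = k ∨ (k : ℕ) + 1 = j then 1 else 0 : ℕ)
      = (if (k : ℕ) = j + 1 then 1 else 0)
        + (if (j : ℕ) = 0 then 0 else if (k : ℕ) = j - 1 then 1 else 0) := by
    intro k
    split_ifs <;> omega
  rw [SimpleGraph.degree_eq_sum_ite, Fintype.sum_sum_type]
  simp only [addPath_adj_inr_inl, addPath_adj_inr_inr, hsplit, ite_and, Finset.sum_add_distrib,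
    Finset.sum_ite_irrel, sum_fin_ite_val_eq, Finset.sum_ite_eq', Finset.mem_univ, if_true,
    Finset.sum_const_zero]
  split_ifs <;> omega

end addPath

section addPathSucc

variable {V : Type*} [Fintype V] [DecidableEq V] (G : SimpleGraph V) [DecidableRel G.Adj]
  {u : V} (s : ℕ)

lemma addPath_succ_degree_inr (j : Fin (s + 1)) :
    ((addPath G u (s + 1)).degree (.inr j) : ℝ)
      = 2 - if (.inr j : V ⊕ Fin (s + 1)) = .inr (Fin.last s) then 1 else 0 := by
  rw [addPath_degree_inr]
  simp only [Sum.inr.injEq, Fin.ext_iff, Fin.val_last]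
  split_ifs <;> first | omega | norm_num

lemma addPath_succ_degree_of_adj (hu : G.degree u = 1) {x y : V ⊕ Fin (s + 1)}
    (hxy : (addPath G u (s + 1)).Adj x y) (hnew : ¬(x.isLeft ∧ y.isLeft)) :
    ((addPath G u (s + 1)).degree x : ℝ) = 2 - if x = .inr (Fin.last s) then 1 else 0 := by
  rcases x with a | j
  · rcases y with b | k
    · simp at hnew
    obtain ⟨rfl, -⟩ := (addPath_adj_inl_inr G u _).mp hxy
    rw [addPath_degree_inl G a _ (by omega), hu, if_pos rfl, if_neg Sum.inl_ne_inr]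
    norm_num
  · exact addPath_succ_degree_inr G s j

lemma addPath_succ_abs_sub_degree_of_not_isLeft (hu : G.degree u = 1) (x y : V ⊕ Fin (s + 1))
    (hnew : ¬(x.isLeft ∧ y.isLeft)) :
    (if (addPath G u (s + 1)).Adj x y then
        |((addPath G u (s + 1)).degree x : ℝ) - (addPath G u (s + 1)).degree y| else 0)
      = if (addPath G u (s + 1)).Adj x y then
          (if x = .inr (Fin.last s) then 1 else 0) + (if y = .inr (Fin.last s) then 1 else 0)
        else 0 := by
  by_cases hxy : (addPath G u (s + 1)).Adj x y
  · rw [if_pos hxy, if_pos hxy, addPath_succ_degree_of_adj G s hu hxy hnew,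
      addPath_succ_degree_of_adj G s hu hxy.symm (by tauto), abs_sub_ite_sub_sub_ite_of_ne hxy.ne]
  · rw [if_neg hxy, if_neg hxy]

lemma addPath_succ_abs_sub_degree_inl (a b : V) :
    (if (addPath G u (s + 1)).Adj (.inl a) (.inl b) then
        |((addPath G u (s + 1)).degree (.inl a) : ℝ) - (addPath G u (s + 1)).degree (.inl b)|
      else 0)
      = if G.Adj a b then |update (fun c => (G.degree c : ℝ)) u (G.degree u + 1) a
          - update (fun c => (G.degree c : ℝ)) u (G.degree u + 1) b| else 0 := by
  have hdeg : ∀ c, ((addPath G u (s + 1)).degree (.inl c) : ℝ)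
      = update (fun c => (G.degree c : ℝ)) u (G.degree u + 1) c := by
    intro c
    rw [addPath_degree_inl G u _ (by omega)]
    by_cases hc : c = u
    · subst hc; simp
    · simp [hc]
  simp only [addPath_adj_inl_inl, hdeg]

theorem Alb_addPath_succ (hu : G.degree u = 1) {v : V} (huv : G.Adj u v) (hv : 2 ≤ G.degree v) :
    Alb (addPath G u (s + 1)) = Alb G := by
  have hold := G.sum_sum_adj_abs_sub_update (f := fun c => (G.degree c : ℝ)) hu huv
    (by simp only [hu]; exact_mod_cast hv)
  have hend := (addPath G u (s + 1)).sum_sum_adj_ite_eq_two_mul_degree (.inr (Fin.last s))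
  have hnew := two_mul_Alb (addPath G u (s + 1))
  rw [addPath_degree_inr, Fin.val_last, if_pos rfl, Nat.cast_one] at hend
  have hend_inl : ∀ a b, (if (addPath G u (s + 1)).Adj (.inl a) (.inl b) then
      (if .inl a = (.inr (Fin.last s) : V ⊕ Fin (s + 1)) then 1 else 0)
        + (if .inl b = (.inr (Fin.last s) : V ⊕ Fin (s + 1)) then 1 else 0) else 0 : ℝ) = 0 := by
    simp
  simp only [Fintype.sum_sum_type, Finset.sum_add_distrib, addPath_succ_abs_sub_degree_inl,
    fun a k => addPath_succ_abs_sub_degree_of_not_isLeft G s hu (.inl a) (.inr k) (by simp),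
    fun k a => addPath_succ_abs_sub_degree_of_not_isLeft G s hu (.inr k) (.inl a) (by simp),
    fun j k => addPath_succ_abs_sub_degree_of_not_isLeft G s hu (.inr j) (.inr k) (by simp),
    hend_inl, Finset.sum_const_zero, zero_add] at hnew hend
  linarith [two_mul_Alb G]

end addPathSucc

theorem stmt11 {V : Type*} [Fintype V] [DecidableEq V]
    (G : SimpleGraph V) [DecidableRel G.Adj] (hG : G.Connected)
    (hn : 3 ≤ Fintype.card V) (u : V) (hu : G.degree u = 1) (t : ℕ) (ht : 1 ≤ t) :
    Alb (addPath G u t) = Alb G := by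
  obtain ⟨v, huv⟩ := (G.degree_pos_iff_exists_adj u).mp (by omega)
  obtain ⟨s, rfl⟩ := Nat.exists_eq_add_of_le' ht
  exact Alb_addPath_succ G s hu huv
    (G.two_le_degree_of_adj_of_degree_eq_one hG.preconnected hn huv hu)
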